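/- For every smooth compactly supported function φ : ℂ → ℝ, one has ∫_ℂ log⁺|z| · Δφ(z) dA(z) = ∫_0^{2π} φ(e^{iθ}) dθ. In other words, the distributional Laplacian of log⁺|z| on ℂ is the angular (arclength) measure on the unit circle, of total mass 2π. -/

import Mathlib

/-- The Laplacian `Δφ = ∂²φ/∂x² + ∂²φ/∂y²` of a function `φ : ℂ → ℝ`, expressed via the
second (real) Fréchet derivative in the directions `1` and `i`. -/
noncomputable def lap (φ : ℂ → ℝ) (z : ℂ) : ℝ :=
  iteratedFDeriv ℝ 2 φ z ![1, 1] + iteratedFDeriv ℝ 2 φ z ![Complex.I, Complex.I]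

/-- `log⁺ t = max (log t) 0`. -/
noncomputable def logPlus (t : ℝ) : ℝ := max (Real.log t) 0

namespace Stmt9

open MeasureTheory Set intervalIntegral
open scoped Real

/-- The point on the unit circle at angle `θ`. -/
noncomputable def uu (θ : ℝ) : ℂ := Complex.exp (θ * Complex.I)

/-- Polar coordinates map `(r, θ) ↦ r e^{iθ}`. -/
noncomputable def EE (r θ : ℝ) : ℂ := (r : ℂ) * uu θ

lemma abs_uu (θ : ℝ) : ‖uu θ‖ = 1 := by
  simp [uu, Complex.norm_exp]

lemma abs_EE (r θ : ℝ) : ‖EE r θ‖ = |r| := by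
  simp [EE, abs_uu, Complex.norm_real]

lemma EE_eq_circleMap (r θ : ℝ) : EE r θ = circleMap 0 r θ := by
  simp [EE, uu, circleMap]

lemma EE_one (θ : ℝ) : EE 1 θ = uu θ := by simp [EE]

lemma hasDerivAt_EE_r (r θ : ℝ) : HasDerivAt (fun r : ℝ => EE r θ) (uu θ) r := by
  have h : HasDerivAt (fun r : ℝ => (r : ℂ)) 1 r := by
    simpa using (hasDerivAt_id r).ofReal_comp
  simpa [EE] using h.mul_const (uu θ)

lemma hasDerivAt_EE_theta (r θ : ℝ) :
    HasDerivAt (fun θ : ℝ => EE r θ) (EE r θ * Complex.I) θ := by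
  simp only [EE_eq_circleMap]
  simpa using hasDerivAt_circleMap 0 r θ

variable (φ : ℂ → ℝ)

/-- Radial derivative of `φ(r e^{iθ})`. -/
noncomputable def gr (r θ : ℝ) : ℝ := fderiv ℝ φ (EE r θ) (uu θ)

/-- Second radial derivative. -/
noncomputable def grr (r θ : ℝ) : ℝ := fderiv ℝ (fderiv ℝ φ) (EE r θ) (uu θ) (uu θ)

/-- Angular derivative. -/
noncomputable def gth (r θ : ℝ) : ℝ := fderiv ℝ φ (EE r θ) (EE r θ * Complex.I)

/-- Second angular derivative. -/
noncomputable def gthth (r θ : ℝ) : ℝ :=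
  fderiv ℝ (fderiv ℝ φ) (EE r θ) (EE r θ * Complex.I) (EE r θ * Complex.I)
    - fderiv ℝ φ (EE r θ) (EE r θ)

noncomputable def G1 (p : ℝ × ℝ) : ℝ := logPlus p.1 * (gr φ p.1 p.2 + p.1 * grr φ p.1 p.2)

noncomputable def G2 (p : ℝ × ℝ) : ℝ := (logPlus p.1 / p.1) * gthth φ p.1 p.2

variable (hφ : ContDiff ℝ (⊤ : ℕ∞) φ)

section derivs
include hφ

end derivs

include hφ in
lemma contDiff_f1 : ContDiff ℝ (⊤ : ℕ∞) (fderiv ℝ φ) := hφ.fderiv_right (m := (⊤ : ℕ∞)) (by simp)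

include hφ in
lemma contDiff_f2 : ContDiff ℝ (⊤ : ℕ∞) (fderiv ℝ (fderiv ℝ φ)) :=
  (contDiff_f1 φ hφ).fderiv_right (m := (⊤ : ℕ∞)) (by simp)

section derivs2
include hφ

lemma hasDerivAt_g_r (r θ : ℝ) :
    HasDerivAt (fun r => φ (EE r θ)) (gr φ r θ) r :=
  (hφ.differentiable (by simp) (EE r θ)).hasFDerivAt.comp_hasDerivAt r (hasDerivAt_EE_r r θ)

lemma hasDerivAt_f1_r (r θ : ℝ) :
    HasDerivAt (fun r => fderiv ℝ φ (EE r θ)) (fderiv ℝ (fderiv ℝ φ) (EE r θ) (uu θ)) r :=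
  ((contDiff_f1 φ hφ).differentiable (by simp) (EE r θ)).hasFDerivAt.comp_hasDerivAt r
    (hasDerivAt_EE_r r θ)

lemma hasDerivAt_gr_r (r θ : ℝ) :
    HasDerivAt (fun r => gr φ r θ) (grr φ r θ) r := by
  have h := (hasDerivAt_f1_r φ hφ r θ).clm_apply (hasDerivAt_const r (uu θ))
  simpa [gr, grr] using h

lemma hasDerivAt_gth_theta (r θ : ℝ) :
    HasDerivAt (fun θ => gth φ r θ) (gthth φ r θ) θ := by
  have hE := hasDerivAt_EE_theta r θ
  have hc : HasDerivAt (fun θ => fderiv ℝ φ (EE r θ))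
      (fderiv ℝ (fderiv ℝ φ) (EE r θ) (EE r θ * Complex.I)) θ :=
    ((contDiff_f1 φ hφ).differentiable (by simp) (EE r θ)).hasFDerivAt.comp_hasDerivAt θ hE
  have hv : HasDerivAt (fun θ => EE r θ * Complex.I) (EE r θ * Complex.I * Complex.I) θ :=
    hE.mul_const Complex.I
  have h := hc.clm_apply hv
  have hII : EE r θ * Complex.I * Complex.I = -EE r θ := by
    rw [mul_assoc, Complex.I_mul_I, mul_neg_one]
  rw [hII] at h
  simpa [gth, gthth, sub_eq_add_neg] using h

end derivs2

lemma rot (L : ℂ →L[ℝ] ℂ →L[ℝ] ℝ) (θ : ℝ) :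
    L (uu θ) (uu θ) + L (uu θ * Complex.I) (uu θ * Complex.I)
      = L 1 1 + L Complex.I Complex.I := by
  have hu : uu θ = Real.cos θ • (1 : ℂ) + Real.sin θ • Complex.I := by
    simp only [uu, Complex.exp_mul_I, Complex.real_smul, mul_one]
    rw [Complex.ofReal_cos, Complex.ofReal_sin]
  have hui : uu θ * Complex.I = (-Real.sin θ) • (1 : ℂ) + Real.cos θ • Complex.I := by
    rw [hu]
    simp only [Complex.real_smul, mul_one, Complex.ofReal_neg]
    linear_combination (Real.sin θ : ℂ) * Complex.I_sq
  rw [hui, hu]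
  simp only [map_add, _root_.map_smul, ContinuousLinearMap.add_apply, ContinuousLinearMap.coe_smul',
    Pi.smul_apply, smul_eq_mul, neg_smul, map_neg, ContinuousLinearMap.neg_apply, mul_neg,
    neg_mul, neg_neg]
  linear_combination (Real.sin_sq_add_cos_sq θ) * (L 1 1 + L Complex.I Complex.I)

lemma lap_eq (z : ℂ) :
    lap φ z = fderiv ℝ (fderiv ℝ φ) z 1 1
      + fderiv ℝ (fderiv ℝ φ) z Complex.I Complex.I := by
  simp [lap, iteratedFDeriv_two_apply]

lemma key {r : ℝ} (hr : r ≠ 0) (θ : ℝ) :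
    r * lap φ (EE r θ) = (gr φ r θ + r * grr φ r θ) + (1 / r) * gthth φ r θ := by
  have hE : EE r θ = r • uu θ := by simp [EE, Complex.real_smul]
  have hEI : EE r θ * Complex.I = r • (uu θ * Complex.I) := by rw [hE, smul_mul_assoc]
  rw [lap_eq, ← rot (fderiv ℝ (fderiv ℝ φ) (EE r θ)) θ]
  unfold gthth grr gr
  rw [hEI, hE]
  simp only [_root_.map_smul, ContinuousLinearMap.smul_apply, smul_eq_mul]
  field_simp
  ring

section vanish

variable {R : ℝ} (hsub : tsupport φ ⊆ Metric.ball 0 R)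
include hsub

lemma phi_vanish {z : ℂ} (hz : R ≤ ‖z‖) : φ z = 0 := by
  refine image_eq_zero_of_notMem_tsupport fun h => ?_
  have := hsub h
  rw [Metric.mem_ball, dist_zero_right] at this
  linarith

lemma f1_vanish {z : ℂ} (hz : R ≤ ‖z‖) : fderiv ℝ φ z = 0 := by
  refine Function.notMem_support.mp fun h => ?_
  have hmem := support_fderiv_subset ℝ h
  have := hsub hmem
  rw [Metric.mem_ball, dist_zero_right] at this
  linarith

lemma f2_vanish {z : ℂ} (hz : R ≤ ‖z‖) : fderiv ℝ (fderiv ℝ φ) z = 0 := by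
  refine Function.notMem_support.mp fun h => ?_
  have h1 := support_fderiv_subset ℝ h
  have hmem := tsupport_fderiv_subset ℝ h1
  have := hsub hmem
  rw [Metric.mem_ball, dist_zero_right] at this
  linarith

end vanish

lemma logPlus_of_abs_le {t : ℝ} (h : |t| ≤ 1) : logPlus t = 0 :=
  max_eq_right (by rw [← Real.log_abs]; exact Real.log_nonpos (abs_nonneg t) h)

lemma logPlus_of_one_le {t : ℝ} (h : 1 ≤ t) : logPlus t = Real.log t :=
  max_eq_left (Real.log_nonneg h)

lemma continuous_logPlus : Continuous logPlus := by
  rw [continuous_iff_continuousAt]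
  intro x
  rcases eq_or_ne x 0 with h | h
  · subst h
    have hev : ∀ᶠ y in nhds (0 : ℝ), logPlus y = 0 := by
      filter_upwards [Ioo_mem_nhds (by norm_num : (-1 : ℝ) < 0) one_pos] with y hy
      exact logPlus_of_abs_le (le_of_lt (abs_lt.mpr ⟨hy.1, hy.2⟩))
    exact ContinuousAt.congr continuousAt_const (hev.mono fun y hy => hy.symm) |>.congr
      (hev.mono fun y hy => rfl)
  · exact ((Real.continuousAt_log h).max continuousAt_const)

lemma continuous_q : Continuous fun r : ℝ => logPlus r / r := by
  rw [continuous_iff_continuousAt]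
  intro x
  rcases eq_or_ne x 0 with h | h
  · subst h
    have hev : ∀ᶠ y in nhds (0 : ℝ), logPlus y / y = 0 := by
      filter_upwards [Ioo_mem_nhds (by norm_num : (-1 : ℝ) < 0) one_pos] with y hy
      rw [logPlus_of_abs_le (le_of_lt (abs_lt.mpr ⟨hy.1, hy.2⟩)), zero_div]
    have : ContinuousAt (fun _ : ℝ => (0 : ℝ)) 0 := continuousAt_const
    exact this.congr (hev.mono fun y hy => hy.symm)
  · exact (continuous_logPlus.continuousAt).div continuousAt_id h

section cont

lemma continuous_uu : Continuous fun θ : ℝ => uu θ := by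
  unfold uu
  exact Complex.continuous_exp.comp (Complex.continuous_ofReal.mul continuous_const)

lemma continuous_EE : Continuous fun p : ℝ × ℝ => EE p.1 p.2 := by
  unfold EE
  exact (Complex.continuous_ofReal.comp continuous_fst).mul
    (continuous_uu.comp continuous_snd)

include hφ

lemma continuous_gr : Continuous fun p : ℝ × ℝ => gr φ p.1 p.2 := by
  unfold gr
  exact (((contDiff_f1 φ hφ).continuous (n := (⊤ : ℕ∞))).comp continuous_EE).clm_apply
    (continuous_uu.comp continuous_snd)

lemma continuous_grr : Continuous fun p : ℝ × ℝ => grr φ p.1 p.2 := by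
  unfold grr
  exact (((contDiff_f2 φ hφ).continuous (n := (⊤ : ℕ∞))).comp
    continuous_EE).clm_apply (continuous_uu.comp continuous_snd) |>.clm_apply
    (continuous_uu.comp continuous_snd)

lemma continuous_gthth : Continuous fun p : ℝ × ℝ => gthth φ p.1 p.2 := by
  unfold gthth
  have hEI : Continuous fun p : ℝ × ℝ => EE p.1 p.2 * Complex.I :=
    continuous_EE.mul continuous_const
  exact ((((contDiff_f2 φ hφ).continuous (n := (⊤ : ℕ∞))).comp
    continuous_EE).clm_apply hEI |>.clm_apply hEI).sub
    ((((contDiff_f1 φ hφ).continuous (n := (⊤ : ℕ∞))).comp continuous_EE).clm_apply continuous_EE)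

lemma continuous_G1 : Continuous (G1 φ) := by
  unfold G1
  exact (continuous_logPlus.comp continuous_fst).mul
    ((continuous_gr φ hφ).add (continuous_fst.mul (continuous_grr φ hφ)))

lemma continuous_G2 : Continuous (G2 φ) := by
  unfold G2
  exact (continuous_q.comp continuous_fst).mul (continuous_gthth φ hφ)

end cont

lemma integrableOn_of_vanish {H : ℝ × ℝ → ℝ} (hc : Continuous H) {R : ℝ} (hR : 0 < R)
    (hvan : ∀ p : ℝ × ℝ, R ≤ p.1 → H p = 0) :
    IntegrableOn H (Ioi (0 : ℝ) ×ˢ Ioo (-π) π) := by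
  have hsplit : Ioi (0 : ℝ) ×ˢ Ioo (-π) π
      = (Ioc 0 R ×ˢ Ioo (-π) π) ∪ (Ioi R ×ˢ Ioo (-π) π) := by
    rw [← Set.union_prod, Set.Ioc_union_Ioi_eq_Ioi hR.le]
  rw [hsplit]
  apply MeasureTheory.IntegrableOn.union
  · exact ((hc.continuousOn).integrableOn_compact (isCompact_Icc.prod isCompact_Icc)).mono_set
      (Set.prod_mono Set.Ioc_subset_Icc_self Set.Ioo_subset_Icc_self)
  · have heq : EqOn H (fun _ => (0 : ℝ)) (Ioi R ×ˢ Ioo (-π) π) := fun p hp =>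
      hvan p (le_of_lt hp.1)
    exact (integrableOn_congr_fun heq (measurableSet_Ioi.prod measurableSet_Ioo)).mpr
      (integrableOn_zero)

/-- A symmetric version of Fubini for set integrals. -/
lemma setIntegral_prod_symm' {f : ℝ × ℝ → ℝ} {s t : Set ℝ}
    (hf : IntegrableOn f (s ×ˢ t) (volume : Measure (ℝ × ℝ))) :
    ∫ z in s ×ˢ t, f z = ∫ y in t, ∫ x in s, f (x, y) := by
  rw [Measure.volume_eq_prod] at hf ⊢
  simp only [← Measure.prod_restrict s t, IntegrableOn] at hf ⊢
  exact MeasureTheory.integral_prod_symm f hf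

lemma setIntegral_prod' {f : ℝ × ℝ → ℝ} {s t : Set ℝ}
    (hf : IntegrableOn f (s ×ˢ t) (volume : Measure (ℝ × ℝ))) :
    ∫ z in s ×ˢ t, f z = ∫ x in s, ∫ y in t, f (x, y) := by
  rw [Measure.volume_eq_prod] at hf ⊢
  exact MeasureTheory.setIntegral_prod f hf

section mainparts

include hφ

lemma theta_integral (r : ℝ) : ∫ θ in Ioo (-π) π, gthth φ r θ = 0 := by
  have hpi : -π ≤ π := by linarith [Real.pi_pos]
  have hcont : Continuous fun θ => gthth φ r θ :=
    (continuous_gthth φ hφ).comp (continuous_const.prodMk continuous_id)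
  rw [← MeasureTheory.integral_Ioc_eq_integral_Ioo, ← intervalIntegral.integral_of_le hpi]
  rw [intervalIntegral.integral_eq_sub_of_hasDerivAt
    (fun θ _ => hasDerivAt_gth_theta φ hφ r θ) (hcont.intervalIntegrable _ _)]
  have hEE : EE r π = EE r (-π) := by
    unfold EE uu
    congr 1
    rw [Complex.ofReal_neg, neg_mul, Complex.exp_neg, Complex.exp_pi_mul_I]
    norm_num
  unfold gth
  rw [hEE, sub_self]

variable {R : ℝ} (hR1 : 1 ≤ R) (hsub : tsupport φ ⊆ Metric.ball 0 R)
include hR1 hsub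

omit hφ in
lemma G1_vanish {p : ℝ × ℝ} (hp : R ≤ p.1) : G1 φ p = 0 := by
  have habs : R ≤ ‖EE p.1 p.2‖ := by
    rw [abs_EE, abs_of_nonneg (le_trans (by linarith) hp)]
    exact hp
  unfold G1 gr grr
  rw [f1_vanish φ hsub habs, f2_vanish φ hsub habs]
  simp

omit hφ in
lemma G2_vanish {p : ℝ × ℝ} (hp : R ≤ p.1) : G2 φ p = 0 := by
  have habs : R ≤ ‖EE p.1 p.2‖ := by
    rw [abs_EE, abs_of_nonneg (le_trans (by linarith) hp)]
    exact hp
  unfold G2 gthth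
  rw [f1_vanish φ hsub habs, f2_vanish φ hsub habs]
  simp

lemma radial_integral (θ : ℝ) :
    ∫ r in Ioi (0 : ℝ), G1 φ (r, θ) = φ (uu θ) := by
  have h0R : (0 : ℝ) < R := lt_of_lt_of_le one_pos hR1
  have hcont : Continuous fun r => G1 φ (r, θ) :=
    (continuous_G1 φ hφ).comp (continuous_id.prodMk continuous_const)
  have hsplit : Ioi (0 : ℝ) = Ioc 0 R ∪ Ioi R := (Set.Ioc_union_Ioi_eq_Ioi h0R.le).symm
  rw [hsplit, MeasureTheory.setIntegral_union (Set.Ioc_disjoint_Ioi le_rfl) measurableSet_Ioi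
    (hcont.integrableOn_Icc.mono_set Set.Ioc_subset_Icc_self)
    (((integrableOn_congr_fun (fun r (hr : r ∈ Ioi R) =>
        G1_vanish φ hR1 hsub (p := (r, θ)) (le_of_lt hr)) measurableSet_Ioi)).mpr
        integrableOn_zero)]
  have h2 : ∫ r in Ioi R, G1 φ (r, θ) = 0 := by
    rw [MeasureTheory.setIntegral_congr_fun measurableSet_Ioi
      (fun r (hr : r ∈ Ioi R) => G1_vanish φ hR1 hsub (p := (r, θ)) (le_of_lt hr))]
    simp
  rw [h2, add_zero, ← intervalIntegral.integral_of_le h0R.le,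
    ← intervalIntegral.integral_add_adjacent_intervals (a := (0 : ℝ)) (b := 1) (c := R)
      (hcont.intervalIntegrable _ _) (hcont.intervalIntegrable _ _)]
  have h01 : ∫ r in (0 : ℝ)..1, G1 φ (r, θ) = 0 := by
    rw [intervalIntegral.integral_congr (g := fun _ => (0 : ℝ))
      (fun r hr => ?_)]
    · simp
    · rw [Set.uIcc_of_le (by norm_num : (0 : ℝ) ≤ 1)] at hr
      unfold G1
      rw [logPlus_of_abs_le (abs_le.mpr ⟨by linarith [hr.1], hr.2⟩), zero_mul]
  rw [h01, zero_add]
  -- now the integral from 1 to R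
  have huIcc : Set.uIcc (1 : ℝ) R = Set.Icc 1 R := Set.uIcc_of_le hR1
  have hcongr : EqOn (fun r => G1 φ (r, θ))
      (fun r => Real.log r * (gr φ r θ + r * grr φ r θ)) (Set.uIcc 1 R) := by
    intro r hr
    rw [huIcc] at hr
    unfold G1
    simp only []
    rw [logPlus_of_one_le hr.1]
  rw [intervalIntegral.integral_congr hcongr]
  have habsR : ∀ r : ℝ, R ≤ r → R ≤ ‖EE r θ‖ := by
    intro r hr
    rw [abs_EE, abs_of_nonneg (by linarith)]
    exact hr
  have hibp := intervalIntegral.integral_mul_deriv_eq_deriv_mul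
    (u := Real.log) (u' := fun r => r⁻¹)
    (v := fun r => r * gr φ r θ) (v' := fun r => gr φ r θ + r * grr φ r θ)
    (a := 1) (b := R)
    (fun x hx => Real.hasDerivAt_log (by rw [huIcc] at hx; linarith [hx.1]))
    (fun x hx => by
      simpa [Pi.mul_def] using (hasDerivAt_id' x).mul (hasDerivAt_gr_r φ hφ x θ))
    (intervalIntegrable_inv (f := fun x => x) (by
      intro x hx
      rw [huIcc] at hx
      show x ≠ 0
      intro h
      rw [h] at hx
      linarith [hx.1])
      (continuous_id.continuousOn))
    (((continuous_gr φ hφ).comp (continuous_id.prodMk continuous_const)).add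
      (continuous_id.mul ((continuous_grr φ hφ).comp
        (continuous_id.prodMk continuous_const))) |>.intervalIntegrable _ _)
  beta_reduce at hibp
  rw [hibp]
  have hgrR : gr φ R θ = 0 := by
    unfold gr; rw [f1_vanish φ hsub (habsR R le_rfl)]; simp
  have hinv : ∫ x in (1 : ℝ)..R, x⁻¹ * (x * gr φ x θ) = ∫ x in (1 : ℝ)..R, gr φ x θ := by
    apply intervalIntegral.integral_congr
    intro x hx
    rw [huIcc] at hx
    have hx0 : x ≠ 0 := by intro h; rw [h] at hx; linarith [hx.1]
    field_simp
  have hftc : ∫ x in (1 : ℝ)..R, gr φ x θ = φ (EE R θ) - φ (EE 1 θ) :=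
    intervalIntegral.integral_eq_sub_of_hasDerivAt
      (fun x _ => hasDerivAt_g_r φ hφ x θ)
      (((continuous_gr φ hφ).comp
        (continuous_id.prodMk continuous_const)).intervalIntegrable _ _)
  have hphiR : φ (EE R θ) = 0 := phi_vanish φ hsub (habsR R le_rfl)
  rw [hinv, hftc]
  simp only [hgrR, hphiR, EE_one, Real.log_one, mul_zero, zero_mul]
  ring

end mainparts

end Stmt9

open Stmt9 MeasureTheory Set
open scoped Real

/-- **The distributional Laplacian of `log⁺|z|` is the angular measure on the unit
circle.** For every smooth compactly supported `φ : ℂ → ℝ`,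
`∫_ℂ log⁺|z| Δφ(z) dA(z) = ∫_0^{2π} φ(e^{iθ}) dθ`. -/
theorem stmt_9 (φ : ℂ → ℝ) (hφ : ContDiff ℝ (⊤ : ℕ∞) φ) (hsupp : HasCompactSupport φ) :
    (∫ z : ℂ, logPlus (‖z‖) * lap φ z) =
      ∫ θ in (0 : ℝ)..(2 * Real.pi), φ (Complex.exp ((θ : ℂ) * Complex.I)) := by
  obtain ⟨R, hR1, hsub⟩ : ∃ R : ℝ, 1 ≤ R ∧ tsupport φ ⊆ Metric.ball 0 R := by
    obtain ⟨R, hR, hsub⟩ := (hsupp.isCompact.isBounded).subset_ball_lt 1 0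
    exact ⟨R, hR.le, hsub⟩
  have h0R : (0 : ℝ) < R := lt_of_lt_of_le one_pos hR1
  rw [← Complex.integral_comp_polarCoord_symm, polarCoord_target]
  have hmeas : MeasurableSet (Ioi (0 : ℝ) ×ˢ Ioo (-π) π) :=
    measurableSet_Ioi.prod measurableSet_Ioo
  have hcongr : ∀ p ∈ Ioi (0 : ℝ) ×ˢ Ioo (-π) π,
      p.1 • (logPlus (‖Complex.polarCoord.symm p‖)
        * lap φ (Complex.polarCoord.symm p)) = G1 φ p + G2 φ p := by
    rintro ⟨r, θ⟩ ⟨hr, hθ⟩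
    have hr0 : (0 : ℝ) < r := hr
    have hsymm : Complex.polarCoord.symm (r, θ) = EE r θ := by
      rw [Complex.polarCoord_symm_apply]
      simp [EE, uu, Complex.exp_mul_I, ← Complex.ofReal_cos, ← Complex.ofReal_sin]
    have habs : ‖Complex.polarCoord.symm (r, θ)‖ = r := by
      rw [Complex.norm_polarCoord_symm, abs_of_pos hr0]
    rw [habs, hsymm, smul_eq_mul]
    have hkey := key φ (ne_of_gt hr0) θ
    unfold G1 G2
    simp only []
    calc r * (logPlus r * lap φ (EE r θ))
        = logPlus r * (r * lap φ (EE r θ)) := by ring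
      _ = logPlus r * ((gr φ r θ + r * grr φ r θ) + (1 / r) * gthth φ r θ) := by rw [hkey]
      _ = logPlus r * (gr φ r θ + r * grr φ r θ) + logPlus r / r * gthth φ r θ := by
          field_simp
  rw [MeasureTheory.setIntegral_congr_fun hmeas hcongr]
  have hintG1 : IntegrableOn (G1 φ) (Ioi (0 : ℝ) ×ˢ Ioo (-π) π) :=
    integrableOn_of_vanish (continuous_G1 φ hφ) h0R
      (fun p hp => G1_vanish φ hR1 hsub hp)
  have hintG2 : IntegrableOn (G2 φ) (Ioi (0 : ℝ) ×ˢ Ioo (-π) π) :=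
    integrableOn_of_vanish (continuous_G2 φ hφ) h0R
      (fun p hp => G2_vanish φ hR1 hsub hp)
  rw [MeasureTheory.integral_add hintG1 hintG2]
  have hG2 : ∫ p in Ioi (0 : ℝ) ×ˢ Ioo (-π) π, G2 φ p = 0 := by
    rw [setIntegral_prod' hintG2]
    have : ∀ r : ℝ, ∫ θ in Ioo (-π) π, G2 φ (r, θ) = 0 := by
      intro r
      unfold G2
      simp only []
      rw [MeasureTheory.integral_const_mul, theta_integral φ hφ r, mul_zero]
    simp only [this]
    simp
  rw [hG2, add_zero]
  rw [setIntegral_prod_symm' hintG1]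
  have hrad : ∀ θ : ℝ, ∫ r in Ioi (0 : ℝ), G1 φ (r, θ) = φ (uu θ) :=
    radial_integral φ hφ hR1 hsub
  simp only [hrad]
  -- ∫ θ in Ioo (-π) π, φ (uu θ) = ∫ θ in 0..2π, φ (exp (θ I))
  have hper : Function.Periodic (fun θ : ℝ => φ (Complex.exp ((θ : ℂ) * Complex.I)))
      (2 * π) := by
    intro θ
    simp only []
    congr 1
    push_cast
    rw [add_mul, Complex.exp_add, Complex.exp_two_pi_mul_I, mul_one]
  have hpi : -π ≤ π := by linarith [Real.pi_pos]
  rw [← MeasureTheory.integral_Ioc_eq_integral_Ioo, ← intervalIntegral.integral_of_le hpi]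
  have h1 : ∫ θ in (-π)..π, φ (uu θ)
      = ∫ θ in (-π)..(-π + 2 * π), φ (Complex.exp ((θ : ℂ) * Complex.I)) := by
    have : π = -π + 2 * π := by ring
    rw [← this]
    rfl
  rw [h1, hper.intervalIntegral_add_eq (-π) 0, zero_add]
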